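/- Let S_1,…,S_m be finite sets and let {f_{s_1,…,s_m}} be an interlacing family of real-rooted degree-n polynomials with positive leading coefficients. Then there exists an assignment (s_1,…,s_m) ∈ S_1×…×S_m such that the largest root of f_{s_1,…,s_m} is at most the largest root of f_∅ = Σ_{(s_1,…,s_m)} f_{s_1,…,s_m}. -/

import Mathlib

open scoped Classical
open Polynomial

/-- A real polynomial is real-rooted if it has a full set of real roots
(counted with multiplicity). -/
def RealRooted (f : Polynomial ℝ) : Prop := Multiset.card f.roots = f.natDegree

/-- The roots of a real polynomial, sorted in increasing order. -/
noncomputable def sortedRoots (f : Polynomial ℝ) : List ℝ := f.roots.sort (· ≤ ·)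

/-- `g` interlaces `f`: both are real-rooted, `deg g = deg f - 1`, and the sorted
roots satisfy `β₁ ≤ α₁ ≤ β₂ ≤ ⋯ ≤ α_{n-1} ≤ β_n`. -/
def Interlaces (g f : Polynomial ℝ) : Prop :=
  RealRooted f ∧ RealRooted g ∧ g.natDegree + 1 = f.natDegree ∧
  ∀ k, k < g.natDegree →
    (sortedRoots f).getD k 0 ≤ (sortedRoots g).getD k 0 ∧
    (sortedRoots g).getD k 0 ≤ (sortedRoots f).getD (k + 1) 0

/-- The largest real root of a polynomial. -/
noncomputable def maxRoot (f : Polynomial ℝ) : ℝ := sSup {x : ℝ | f.IsRoot x}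

/-- The sum of the polynomials over all assignments agreeing with `s` on the first `k`
coordinates. -/
noncomputable def partialSum (m : ℕ) (S : Fin m → Type) [∀ i, Fintype (S i)]
    (f : (∀ i, S i) → Polynomial ℝ) (k : ℕ) (s : ∀ i, S i) : Polynomial ℝ :=
  ∑ t ∈ Finset.univ.filter (fun t : ∀ i, S i => ∀ i : Fin m, (i : ℕ) < k → t i = s i), f t

/-- `f` is an interlacing family: for every partial assignment, the polynomials obtained
by extending it by one coordinate have a common interlacing. -/
def InterlacingFamily (m : ℕ) (S : Fin m → Type) [∀ i, Fintype (S i)]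
    (f : (∀ i, S i) → Polynomial ℝ) : Prop :=
  ∀ (k : ℕ) (hk : k < m) (s : ∀ i, S i),
    ∃ g : Polynomial ℝ, g.Monic ∧
      ∀ t : S ⟨k, hk⟩,
        Interlaces g (partialSum m S f (k + 1) (Function.update s ⟨k, hk⟩ t))

/-!
Let `g` be a common interlacing of the `F t`. The `i`-th root of `F t` is at most the `i`-th root
of `g`, which is at most the `(i+1)`-st, hence the largest, root of any `F u`. So at
`x = min_t maxRoot (F t)` every `F u` is nonpositive (only its top root factor is `≤ 0`), and so
is `∑ u, F u`; as that sum has positive leading coefficient, its largest root is at least `x`.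
Fixing the coordinates one at a time by this argument descends from `f_∅` to a single `f s`.
-/

lemma List.prod_map_eq_prod_range_getD {α M : Type*} [CommMonoid M] (L : List α) (d : α)
    (g : α → M) : (L.map g).prod = ∏ i ∈ Finset.range L.length, g (L.getD i d) := by
  induction L with
  | nil => simp
  | cons a L ih => simp [Finset.prod_range_succ', ih, mul_comm]

lemma Polynomial.leadingCoeff_add_pos {R : Type*} [Semiring R] [LinearOrder R]
    [IsStrictOrderedRing R] {p q : R[X]} (hp : 0 < p.leadingCoeff)
    (hq : 0 < q.leadingCoeff) : 0 < (p + q).leadingCoeff := by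
  rcases lt_trichotomy p.degree q.degree with h | h | h
  · rwa [leadingCoeff_add_of_degree_lt h]
  · rw [leadingCoeff_add_of_degree_eq h (by positivity)]
    positivity
  · rwa [leadingCoeff_add_of_degree_lt' h]

lemma Polynomial.leadingCoeff_sum_pos {R ι : Type*} [Semiring R] [LinearOrder R]
    [IsStrictOrderedRing R] {s : Finset ι} (hs : s.Nonempty) {F : ι → R[X]}
    (hF : ∀ i ∈ s, 0 < (F i).leadingCoeff) :
    0 < (∑ i ∈ s, F i).leadingCoeff := by
  induction hs using Finset.Nonempty.cons_induction with
  | singleton a => simpa using hF a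
  | cons a s _ _ ih =>
    rw [Finset.sum_cons]
    simp only [Finset.forall_mem_cons] at hF
    exact leadingCoeff_add_pos hF.1 (ih hF.2)

section MaxRoot

variable {f : ℝ[X]}

lemma le_maxRoot (hf : f ≠ 0) {x : ℝ} (hx : f.IsRoot x) : x ≤ maxRoot f :=
  le_csSup (finite_setOfPred_isRoot hf).bddAbove hx

lemma isRoot_maxRoot (hf : f ≠ 0) {x : ℝ} (hx : f.IsRoot x) : f.IsRoot (maxRoot f) :=
  Set.Nonempty.csSup_mem ⟨x, hx⟩ (finite_setOfPred_isRoot hf)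

lemma le_maxRoot_of_eval_nonpos (hl : 0 < f.leadingCoeff) {x : ℝ} (hx : f.eval x ≤ 0) :
    x ≤ maxRoot f := by
  have hf : f ≠ 0 := leadingCoeff_ne_zero.1 hl.ne'
  rcases hx.lt_or_eq with hneg | hroot
  · have hdeg : 0 < f.degree := by
      by_contra! h
      rw [eq_C_of_degree_le_zero h, leadingCoeff_C] at hl
      rw [eq_C_of_degree_le_zero h, eval_C] at hneg
      linarith
    obtain ⟨y, hy_pos, hxy⟩ := ((f.tendsto_atTop_of_leadingCoeff_nonneg hdeg hl.le
      |>.eventually_gt_atTop 0).and (Filter.eventually_gt_atTop x)).exists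
    obtain ⟨z, hz, hz_root⟩ := intermediate_value_Ioo hxy.le f.continuous.continuousOn
      ⟨hneg, hy_pos⟩
    exact hz.1.le.trans (le_maxRoot hf hz_root)
  · exact le_maxRoot hf hroot

end MaxRoot

section SortedRoots

variable {f : ℝ[X]}

lemma mem_sortedRoots {a : ℝ} : a ∈ sortedRoots f ↔ a ∈ f.roots :=
  Multiset.mem_sort _

lemma coe_sortedRoots (f : ℝ[X]) : (sortedRoots f : Multiset ℝ) = f.roots :=
  Multiset.sort_eq _ _

lemma sortedRoots_getD_mono {i j : ℕ} (hij : i ≤ j) (hj : j < (sortedRoots f).length) :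
    (sortedRoots f).getD i 0 ≤ (sortedRoots f).getD j 0 := by
  rw [List.getD_eq_getElem _ _ (hij.trans_lt hj), List.getD_eq_getElem _ _ hj]
  exact (Multiset.pairwise_sort _ _).rel_get_of_le
    (a := ⟨i, hij.trans_lt hj⟩) (b := ⟨j, hj⟩) hij

lemma RealRooted.length_sortedRoots (hf : RealRooted f) :
    (sortedRoots f).length = f.natDegree :=
  (Multiset.length_sort _).trans hf

lemma RealRooted.eval_eq_prod_sortedRoots (hf : RealRooted f) (x : ℝ) :
    f.eval x =
      f.leadingCoeff * ∏ i ∈ Finset.range f.natDegree, (x - (sortedRoots f).getD i 0) := by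
  rw [(splits_iff_card_roots.2 hf).eval_eq_prod_roots, ← coe_sortedRoots,
    Multiset.map_coe, Multiset.prod_coe, List.prod_map_eq_prod_range_getD _ 0,
    ← hf.length_sortedRoots]

lemma RealRooted.maxRoot_eq_getD (hf : RealRooted f) {d : ℕ} (hd : f.natDegree = d + 1) :
    maxRoot f = (sortedRoots f).getD d 0 := by
  have hf0 : f ≠ 0 := by rintro rfl; simp at hd
  have hlen := hf.length_sortedRoots
  have hroot : f.IsRoot ((sortedRoots f).getD d 0) := by
    refine isRoot_of_mem_roots (mem_sortedRoots.1 ?_)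
    rw [List.getD_eq_getElem _ _ (by omega)]
    exact List.getElem_mem _
  refine le_antisymm ?_ (le_maxRoot hf0 hroot)
  obtain ⟨j, hj, hj_eq⟩ := List.mem_iff_getElem.1 <|
    mem_sortedRoots.2 ((mem_roots hf0).2 (isRoot_maxRoot hf0 hroot))
  rw [← hj_eq, ← List.getD_eq_getElem _ 0 hj]
  exact sortedRoots_getD_mono (by omega) (by omega)

lemma RealRooted.eval_nonpos (hf : RealRooted f) (hl : 0 ≤ f.leadingCoeff) {d : ℕ}
    (hd : f.natDegree = d + 1) {x : ℝ} (hlow : ∀ i < d, (sortedRoots f).getD i 0 ≤ x)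
    (hx : x ≤ maxRoot f) : f.eval x ≤ 0 := by
  rw [hf.eval_eq_prod_sortedRoots, hd, Finset.prod_range_succ, ← hf.maxRoot_eq_getD hd]
  refine mul_nonpos_of_nonneg_of_nonpos hl (mul_nonpos_of_nonneg_of_nonpos ?_ (by linarith))
  exact Finset.prod_nonneg fun i hi => sub_nonneg.2 (hlow i (Finset.mem_range.1 hi))

end SortedRoots

lemma Interlaces.getD_sortedRoots_le_maxRoot {g f h : ℝ[X]} (hf : Interlaces g f)
    (hh : Interlaces g h) {i : ℕ} (hi : i < g.natDegree) :
    (sortedRoots f).getD i 0 ≤ maxRoot h := by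
  obtain ⟨hh_rr, -, hh_deg, hh_roots⟩ := hh
  calc (sortedRoots f).getD i 0 ≤ (sortedRoots g).getD i 0 := (hf.2.2.2 i hi).1
    _ ≤ (sortedRoots h).getD (i + 1) 0 := (hh_roots i hi).2
    _ ≤ (sortedRoots h).getD g.natDegree 0 :=
      sortedRoots_getD_mono hi (by rw [hh_rr.length_sortedRoots]; omega)
    _ = maxRoot h := (hh_rr.maxRoot_eq_getD hh_deg.symm).symm

theorem exists_maxRoot_le_maxRoot_sum_of_interlaces {ι : Type*} [Fintype ι] [Nonempty ι]
    {F : ι → ℝ[X]} {g : ℝ[X]} (hI : ∀ t, Interlaces g (F t))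
    (hl : ∀ t, 0 < (F t).leadingCoeff) : ∃ t, maxRoot (F t) ≤ maxRoot (∑ t, F t) := by
  obtain ⟨t₀, ht₀⟩ := Finite.exists_min (fun t => maxRoot (F t))
  refine ⟨t₀, le_maxRoot_of_eval_nonpos (leadingCoeff_sum_pos Finset.univ_nonempty
    fun t _ => hl t) ?_⟩
  rw [eval_finsetSum]
  exact Finset.sum_nonpos fun t _ => (hI t).1.eval_nonpos (hl t).le (hI t).2.2.1.symm
    (fun i hi => (hI t).getD_sortedRoots_le_maxRoot (hI t₀) hi) (ht₀ t)

section PartialSum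

variable {m : ℕ} {S : Fin m → Type} [∀ i, Fintype (S i)] (f : (∀ i, S i) → ℝ[X])

lemma partialSum_zero (s : ∀ i, S i) : partialSum m S f 0 s = ∑ t, f t := by
  simp [partialSum]

lemma partialSum_self (s : ∀ i, S i) : partialSum m S f m s = f s := by
  have hs : Finset.univ.filter (fun t : ∀ i, S i => ∀ i : Fin m, (i : ℕ) < m → t i = s i)
      = {s} := by
    ext t
    simp [funext_iff]
  rw [partialSum, hs, Finset.sum_singleton]

lemma partialSum_succ (k : ℕ) (hk : k < m) (s : ∀ i, S i) :
    partialSum m S f k s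
      = ∑ t : S ⟨k, hk⟩, partialSum m S f (k + 1) (Function.update s ⟨k, hk⟩ t) := by
  rw [partialSum, ← Finset.sum_fiberwise _ (fun u => u ⟨k, hk⟩) f]
  refine Finset.sum_congr rfl fun t _ => ?_
  rw [partialSum, Finset.filter_filter]
  congr 1
  ext u
  simp only [Finset.mem_filter, Finset.mem_univ, true_and, Nat.lt_succ_iff_lt_or_eq, or_imp,
    forall_and]
  refine and_congr (forall₂_congr fun i hi => ?_)
    ⟨fun h x hx => ?_, fun h => by simpa using h ⟨k, hk⟩ rfl⟩
  · rw [Function.update_of_ne (Fin.ne_of_lt (b := ⟨k, hk⟩) hi)]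
  · obtain rfl : x = ⟨k, hk⟩ := Fin.ext hx
    simpa using h

lemma leadingCoeff_partialSum_pos (hlead : ∀ s, 0 < (f s).leadingCoeff) (k : ℕ)
    (s : ∀ i, S i) : 0 < (partialSum m S f k s).leadingCoeff :=
  leadingCoeff_sum_pos ⟨s, by simp⟩ fun t _ => hlead t

end PartialSum

theorem InterlacingFamily.exists_maxRoot_partialSum_le {m : ℕ} {S : Fin m → Type}
    [∀ i, Fintype (S i)] [∀ i, Nonempty (S i)] {f : (∀ i, S i) → ℝ[X]}
    (hfam : InterlacingFamily m S f) (hlead : ∀ s, 0 < (f s).leadingCoeff) :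
    ∀ k ≤ m, ∃ s, maxRoot (partialSum m S f k s) ≤ maxRoot (∑ t, f t)
  | 0, _ => ⟨Classical.arbitrary _, by rw [partialSum_zero]⟩
  | k + 1, hk => by
    obtain ⟨s, hs⟩ := hfam.exists_maxRoot_partialSum_le hlead k (by omega)
    obtain ⟨g, -, hg⟩ := hfam k hk s
    obtain ⟨t, ht⟩ := exists_maxRoot_le_maxRoot_sum_of_interlaces hg
      fun t => leadingCoeff_partialSum_pos f hlead _ _
    exact ⟨_, ht.trans (partialSum_succ f k hk s ▸ hs)⟩

theorem interlacingFamily_exists_le_maxRoot_general (m : ℕ) (S : Fin m → Type)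
    [∀ i, Fintype (S i)] [∀ i, Nonempty (S i)] (f : (∀ i, S i) → Polynomial ℝ)
    (hlead : ∀ s, 0 < (f s).leadingCoeff)
    (hfam : InterlacingFamily m S f) :
    ∃ s : ∀ i, S i, maxRoot (f s) ≤ maxRoot (∑ t : ∀ i, S i, f t) := by
  obtain ⟨s, hs⟩ := hfam.exists_maxRoot_partialSum_le hlead m le_rfl
  exact ⟨s, partialSum_self f s ▸ hs⟩

/-- In an interlacing family some assignment has largest root at most the largest root of
the sum over all assignments. -/
theorem interlacingFamily_exists_le_maxRoot (m n : ℕ) (S : Fin m → Type)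
    [∀ i, Fintype (S i)] [∀ i, Nonempty (S i)] (f : (∀ i, S i) → Polynomial ℝ)
    (hrr : ∀ s, RealRooted (f s)) (hdeg : ∀ s, (f s).natDegree = n)
    (hlead : ∀ s, 0 < (f s).leadingCoeff)
    (hfam : InterlacingFamily m S f) :
    ∃ s : ∀ i, S i, maxRoot (f s) ≤ maxRoot (∑ t : ∀ i, S i, f t) :=
  interlacingFamily_exists_le_maxRoot_general m S f hlead hfam
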